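/- Every valid covering inequality for the dominant of the odd cycle polytope transfers to a valid inequality for the odd-red perfect matching polytope: if a ∈ R^E_{≥0}, b ∈ R and a^T χ^C ≥ b for every odd cycle C in G, then for every perfect matching M of Ĝ with |M ∩ R̂| odd, Σ_{{u,v}∈E} a_{{u,v}}(χ^M_{{u⁺,v⁻}} + χ^M_{{u⁻,v⁺}}) ≥ b. -/

import Mathlib

/-!
A perfect matching `M` of `Ĝ` is the graph of a permutation `σ` of `V`: it matches `v⁺` with
`(σ v)⁻`. Its red edges are the `{v⁺, (σ v)⁻}` with `σ v ≠ v`, and for those `v` the edge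
`{v, σ v}` lies in `G`. So an odd number of red edges means that `σ` moves an odd number of
points, hence some cycle of `σ` has odd length (at least `3`), and walking along it gives an odd
cycle `C` of `G` whose edges are the projections of distinct red edges of `M`. As `a ≥ 0`,
`b ≤ a(C)` is at most the sum over all red edges.
-/

open SimpleGraph

/-- The bipartite double cover `Ĝ` of a graph `G` (`Sum.inl v = v⁺`, `Sum.inr v = v⁻`). -/
def doubleCover {V : Type*} (G : SimpleGraph V) : SimpleGraph (V ⊕ V) where
  Adj a b :=
    match a, b with
    | Sum.inl u, Sum.inr v => u = v ∨ G.Adj u v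
    | Sum.inr u, Sum.inl v => u = v ∨ G.Adj u v
    | _, _ => False
  symm := by
    constructor
    rintro (u | u) (v | v) h
    · exact h.elim
    · exact h.imp Eq.symm (fun h' => h'.symm)
    · exact h.imp Eq.symm (fun h' => h'.symm)
    · exact h.elim
  loopless := ⟨by rintro (u | u) h <;> exact h⟩

open Finset Equiv

namespace Equiv.Perm

theorem exists_mem_cycleFactorsFinset_odd_card_support {α : Type*} [Fintype α] [DecidableEq α]
    {σ : Perm α} (h : Odd #σ.support) : ∃ c ∈ σ.cycleFactorsFinset, Odd #c.support := by
  by_contra! hall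
  have heven : Even σ.cycleType.sum :=
    Finset.even_sum _ fun c hc => Nat.not_odd_iff_even.mp (hall c hc)
  rw [sum_cycleType, ← Nat.not_odd_iff_even] at heven
  exact heven h

variable {α : Type*} {f : Perm α} {s : Finset α} {a : α}

theorem IsCycleOn.pow_apply_injOn (hf : f.IsCycleOn s) (ha : a ∈ s) :
    Set.InjOn (fun k => (f ^ k) a) (range #s) := fun _ hk _ hl hkl =>
  ((hf.pow_apply_eq_pow_apply ha).mp hkl).eq_of_lt_of_lt (mem_range.mp hk) (mem_range.mp hl)

theorem IsCycleOn.sum_range_pow_apply {M : Type*} [AddCommMonoid M] (hf : f.IsCycleOn s)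
    (ha : a ∈ s) (g : α → M) : ∑ k ∈ range #s, g ((f ^ k) a) = ∑ v ∈ s, g v :=
  Finset.sum_nbij (fun k => (f ^ k) a) (fun _ _ => hf.1.mapsTo.perm_pow _ ha)
    (hf.pow_apply_injOn ha)
    (fun _ hb => by
      obtain ⟨k, hk, rfl⟩ := hf.exists_pow_eq ha hb
      exact ⟨k, mem_range.mpr hk, rfl⟩)
    fun _ _ => rfl

end Equiv.Perm

namespace SimpleGraph

variable {V : Type*} {G : SimpleGraph V}

def Walk.ofSeq (q : ℕ → V) (hq : ∀ k, G.Adj (q k) (q (k + 1))) : (n : ℕ) → G.Walk (q 0) (q n)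
  | 0 => .nil
  | n + 1 => (ofSeq q hq n).concat (hq n)

namespace Walk

variable (q : ℕ → V) (hq : ∀ k, G.Adj (q k) (q (k + 1)))

@[simp]
theorem length_ofSeq (n : ℕ) : (ofSeq q hq n).length = n := by
  induction n with
  | zero => rfl
  | succ n ih => simp [ofSeq, ih]

theorem support_ofSeq (n : ℕ) : (ofSeq q hq n).support = (List.range (n + 1)).map q := by
  induction n with
  | zero => rfl
  | succ n ih => simp [ofSeq, ih, List.range_succ]

theorem edges_ofSeq (n : ℕ) :
    (ofSeq q hq n).edges = (List.range n).map fun k => s(q k, q (k + 1)) := by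
  induction n with
  | zero => rfl
  | succ n ih => simp [ofSeq, ih, List.range_succ]

end Walk

theorem exists_isCycle_of_isCycleOn {M : Type*} [AddCommMonoid M] {f : Equiv.Perm V}
    {s : Finset V} (hf : f.IsCycleOn s) (hs : 3 ≤ #s) (hadj : ∀ v ∈ s, G.Adj v (f v))
    (g : Sym2 V → M) : ∃ (u : V) (p : G.Walk u u),
      p.IsCycle ∧ p.length = #s ∧ (p.edges.map g).sum = ∑ v ∈ s, g s(v, f v) := by
  obtain ⟨a, ha⟩ : s.Nonempty := Finset.card_pos.mp (by omega)
  set q : ℕ → V := fun k => (f ^ k) a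
  have hq_mem (k : ℕ) : q k ∈ s := hf.1.mapsTo.perm_pow k ha
  have hq_succ (k : ℕ) : q (k + 1) = f (q k) := by simp [q, pow_succ', Perm.mul_apply]
  have hq : ∀ k, G.Adj (q k) (q (k + 1)) := fun k => hq_succ k ▸ hadj _ (hq_mem k)
  let p : G.Walk a a := (Walk.ofSeq q hq #s).copy (by simp [q]) (hf.pow_card_apply ha)
  refine ⟨a, p, ?_, by simp [p], ?_⟩
  · have hp : ¬p.Nil := Walk.not_nil_iff_lt_length.mpr <| by
      simp only [p, Walk.length_copy, Walk.length_ofSeq]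
      omega
    refine Walk.isCycle_iff_isPath_tail_and_le_length.mpr ⟨?_, by simpa [p] using hs⟩
    rw [Walk.isPath_def, Walk.support_tail_of_not_nil _ hp, Walk.support_copy, Walk.support_ofSeq,
      List.range_succ_eq_map, List.map_cons, List.tail_cons, List.map_map]
    refine List.nodup_range.map_on fun k hk l hl hkl => ?_
    exact ((hf.pow_apply_eq_pow_apply ha).mp hkl).add_right_cancel' 1 |>.eq_of_lt_of_lt
      (List.mem_range.mp hk) (List.mem_range.mp hl)
  · rw [Walk.edges_copy, Walk.edges_ofSeq, List.map_map,
      ← hf.sum_range_pow_apply ha fun v => g s(v, f v), ← List.toFinset_range,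
      List.sum_toFinset _ List.nodup_range]
    simp only [Function.comp_def, hq_succ, q]

namespace Subgraph.IsPerfectMatching

open Sum

variable {M : (doubleCover G).Subgraph}

theorem existsUnique_adj_inl (hM : M.IsPerfectMatching) (v : V) :
    ∃! w, M.Adj (inl v) (inr w) := by
  obtain ⟨w, hvw, huniq⟩ := isPerfectMatching_iff.mp hM (inl v)
  rcases w with w | w
  · exact (M.adj_sub hvw).elim
  · exact ⟨w, hvw, fun w' h => inr_injective (huniq _ h)⟩

theorem existsUnique_adj_inr (hM : M.IsPerfectMatching) (w : V) :
    ∃! v, M.Adj (inl v) (inr w) := by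
  obtain ⟨v, hvw, huniq⟩ := isPerfectMatching_iff.mp hM (inr w)
  rcases v with v | v
  · exact ⟨v, hvw.symm, fun v' h => inl_injective (huniq _ h.symm)⟩
  · exact (M.adj_sub hvw).elim

noncomputable def matchingPerm (hM : M.IsPerfectMatching) : Perm V where
  toFun v := (hM.existsUnique_adj_inl v).exists.choose
  invFun w := (hM.existsUnique_adj_inr w).exists.choose
  left_inv v := ((hM.existsUnique_adj_inr _).unique
    (hM.existsUnique_adj_inr _).exists.choose_spec (hM.existsUnique_adj_inl v).exists.choose_spec)
  right_inv w := ((hM.existsUnique_adj_inl _).unique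
    (hM.existsUnique_adj_inl _).exists.choose_spec (hM.existsUnique_adj_inr w).exists.choose_spec)

variable (hM : M.IsPerfectMatching)

theorem adj_inl_inr_iff {v w : V} : M.Adj (inl v) (inr w) ↔ hM.matchingPerm v = w :=
  ⟨fun h => (hM.existsUnique_adj_inl v).unique (hM.existsUnique_adj_inl v).exists.choose_spec h,
    fun h => h ▸ (hM.existsUnique_adj_inl v).exists.choose_spec⟩

theorem adj_matchingPerm {v : V} (hv : hM.matchingPerm v ≠ v) : G.Adj v (hM.matchingPerm v) :=
  (M.adj_sub (hM.adj_inl_inr_iff.mpr rfl)).resolve_left hv.symm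

theorem edgeSet_eq_range : M.edgeSet = Set.range fun v => s(inl v, inr (hM.matchingPerm v)) := by
  ext ⟨x, y⟩
  have not_inl_inl (u w : V) : ¬M.Adj (inl u) (inl w) := fun h => M.adj_sub h
  have not_inr_inr (u w : V) : ¬M.Adj (inr u) (inr w) := fun h => M.adj_sub h
  rcases x with u | u <;> rcases y with w | w <;>
    simp [not_inl_inl, not_inr_inr, hM.adj_inl_inr_iff, M.adj_comm (inr _)]

theorem edgeSet_inter_red [Fintype V] [DecidableEq V] :
    M.edgeSet ∩ {e | ∀ v : V, e ≠ s(inl v, inr v)} =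
      (fun v => s(inl v, inr (hM.matchingPerm v))) '' hM.matchingPerm.support := by
  rw [hM.edgeSet_eq_range]
  ext e
  simp only [Set.mem_inter_iff, Set.mem_range, Set.mem_ofPred_eq, Set.mem_image, Finset.mem_coe,
    Perm.mem_support]
  constructor
  · rintro ⟨⟨v, rfl⟩, hred⟩
    exact ⟨v, fun h => hred v (by rw [h]), rfl⟩
  · rintro ⟨v, hv, rfl⟩
    refine ⟨⟨v, rfl⟩, fun w h => ?_⟩
    obtain ⟨rfl, hw⟩ : v = w ∧ hM.matchingPerm v = w := by simpa using h
    exact hv hw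

end Subgraph.IsPerfectMatching

end SimpleGraph

/-- Any valid covering inequality `a^T x ≥ b` (with `a ≥ 0`) for the dominant of the
odd cycle polytope of `G` transfers to a valid inequality for the odd-red perfect
matching polytope of the double cover `Ĝ`: for every perfect matching `M` of `Ĝ`
containing an odd number of red edges, the sum of `a` over the projections to `G` of
the red matching edges is at least `b`. -/
theorem stmt_8 {V : Type*} [Fintype V] [DecidableEq V] (G : SimpleGraph V)
    (a : Sym2 V → ℝ) (ha : ∀ e, 0 ≤ a e) (b : ℝ)
    (hvalid : ∀ (u : V) (p : G.Walk u u), p.IsCycle → Odd p.length →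
      b ≤ (p.edges.map a).sum)
    (M : (doubleCover G).Subgraph) (hM : M.IsPerfectMatching)
    (hodd : Odd ((M.edgeSet ∩ {e | ∀ v : V, e ≠ s(Sum.inl v, Sum.inr v)}).ncard)) :
    b ≤ ∑ᶠ m ∈ M.edgeSet ∩ {e | ∀ v : V, e ≠ s(Sum.inl v, Sum.inr v)},
        a (Sym2.map (Sum.elim id id) m) := by
  set σ := hM.matchingPerm
  have hlift : Function.Injective fun v => s(Sum.inl v, Sum.inr (σ v)) := fun v w h =>
    (by simpa using h : v = w ∧ σ v = σ w).1
  rw [hM.edgeSet_inter_red, Set.ncard_image_of_injective _ hlift, Set.ncard_coe_finset] at hodd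
  rw [hM.edgeSet_inter_red, finsum_mem_image hlift.injOn, finsum_mem_coe_finset]
  simp only [Sym2.map_mk, Sum.elim_inl, Sum.elim_inr, id]
  obtain ⟨c, hc, hc_odd⟩ := Perm.exists_mem_cycleFactorsFinset_odd_card_support hodd
  have hc_sub : c.support ⊆ σ.support := Perm.mem_cycleFactorsFinset_support_le hc
  have hc_three : 3 ≤ #c.support := by
    have := (Perm.mem_cycleFactorsFinset_iff.mp hc).1.two_le_card_support
    obtain ⟨k, hk⟩ := hc_odd
    omega
  obtain ⟨u, p, hp_cycle, hp_length, hp_sum⟩ := SimpleGraph.exists_isCycle_of_isCycleOn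
    (Perm.isCycleOn_support_of_mem_cycleFactorsFinset hc) hc_three
    (fun v hv => hM.adj_matchingPerm (Perm.mem_support.mp (hc_sub hv))) a
  calc b ≤ (p.edges.map a).sum := hvalid u p hp_cycle (hp_length ▸ hc_odd)
    _ = ∑ v ∈ c.support, a s(v, σ v) := hp_sum
    _ ≤ ∑ v ∈ σ.support, a s(v, σ v) :=
      Finset.sum_le_sum_of_subset_of_nonneg hc_sub fun _ _ _ => ha _
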